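/- Under the continuous-time maximum-consensus dynamics with positive continuous weight functions, the maximum state value over all nodes is invariant in time: max_{1 ≤ i ≤ n} x_i(t) = max_{1 ≤ i ≤ n} x_i(0) for all t ≥ 0. -/
import Mathlib


open Filter Topology

/-- Under the continuous-time maximum-consensus dynamics with positive
continuous weight functions, the maximum state value over all nodes is
invariant in time. -/
theorem ct_maximum_consensus_max_invariant
    (n : ℕ) (hn : 2 ≤ n)
    (G : SimpleGraph (Fin n)) [DecidableRel G.Adj]
    (hconn : G.Connected)
    (x : ℝ → Fin n → ℝ)
    (a : Fin n → ℝ → ℝ)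
    (ha_cont : ∀ j, Continuous (a j))
    (ha_pos : ∀ j t, 0 < a j t)
    (hdyn : ∀ i, ∀ t : ℝ, 0 ≤ t →
      HasDerivAt (fun s => x s i)
        ((insert i (G.neighborFinset i)).sup'
          (Finset.insert_nonempty i _) (fun j => a j t * (x t j - x t i))) t) :
    ∀ t : ℝ, 0 ≤ t →
      Finset.univ.sup' (Finset.univ_nonempty_iff.mpr ⟨⟨0, by omega⟩⟩)
          (fun i => x t i)
        = Finset.univ.sup' (Finset.univ_nonempty_iff.mpr ⟨⟨0, by omega⟩⟩)
            (fun i => x 0 i) := by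
  have he : (Finset.univ : Finset (Fin n)).Nonempty :=
    Finset.univ_nonempty_iff.mpr ⟨⟨0, by omega⟩⟩
  set M : ℝ → ℝ := fun t => Finset.univ.sup' he (fun i => x t i) with hMdef
  have hcx : ∀ (i : Fin n) (t : ℝ), 0 ≤ t → ContinuousAt (fun s => x s i) t :=
    fun i t ht => (hdyn i t ht).continuousAt
  have hcM : ∀ t : ℝ, 0 ≤ t → ContinuousAt M t := fun t ht =>
    ContinuousAt.finset_sup'_apply he (fun i _ => hcx i t ht)
  -- each component is monotone on [0, ∞)
  have hderiv0 : ∀ (i : Fin n) (t : ℝ),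
      0 ≤ ((insert i (G.neighborFinset i)).sup'
        (Finset.insert_nonempty i _) (fun j => a j t * (x t j - x t i))) := by
    intro i t
    refine le_trans ?_ (Finset.le_sup' _ (Finset.mem_insert_self i _))
    simp
  have hmono : ∀ i : Fin n, MonotoneOn (fun s => x s i) (Set.Ici 0) := by
    intro i
    apply monotoneOn_of_deriv_nonneg (convex_Ici 0)
    · exact fun t ht => (hcx i t ht).continuousWithinAt
    · intro t ht
      rw [interior_Ici] at ht
      exact ((hdyn i t (le_of_lt ht)).differentiableAt).differentiableWithinAt
    · intro t ht
      rw [interior_Ici] at ht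
      rw [(hdyn i t ht.le).deriv]
      exact hderiv0 i t
  intro T hT
  apply le_antisymm
  · -- M T ≤ M 0, via the fencing lemma
    have key : ∀ ε : ℝ, 0 < ε → M T ≤ M 0 + ε * T := by
      intro ε hε
      have main := image_le_of_liminf_slope_right_lt_deriv_boundary'
        (f := M) (f' := fun _ => (0 : ℝ)) (a := 0) (b := T)
        (B := fun s => M 0 + ε * s) (B' := fun _ => ε)
        (fun t ht => (hcM t ht.1).continuousWithinAt)
        ?_ (by simp) ?_ ?_ (fun t _ _ => hε) (Set.right_mem_Icc.mpr hT)
      · exact main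
      · -- liminf slope condition
        intro t ht r hr
        -- find a node achieving the max frequently to the right of t
        have hfreq : ∃ k : Fin n, ∃ᶠ z in 𝓝[>] t, x z k = M z := by
          by_contra h
          push_neg at h
          have hall : ∀ᶠ z in 𝓝[>] t, ∀ k : Fin n, ¬ x z k = M z :=
            Filter.eventually_all.2 h
          obtain ⟨z, hz⟩ := hall.exists
          obtain ⟨k, _, hk⟩ := Finset.exists_mem_eq_sup' he (fun i => x z i)
          exact hz k hk.symm
        obtain ⟨k, hk⟩ := hfreq
        -- k is a maximizer at t, by continuity
        have hxkM : x t k = M t := by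
          refine tendsto_nhds_unique_of_frequently_eq
            (((hcx k t ht.1).tendsto).mono_left nhdsWithin_le_nhds)
            (((hcM t ht.1).tendsto).mono_left nhdsWithin_le_nhds) hk
        -- the derivative of x · k at t is ≤ 0
        have hd : ((insert k (G.neighborFinset k)).sup'
            (Finset.insert_nonempty k _) (fun j => a j t * (x t j - x t k))) ≤ 0 := by
          apply Finset.sup'_le
          intro j _
          have hle : x t j ≤ x t k := by
            rw [hxkM]; exact Finset.le_sup' _ (Finset.mem_univ j)
          exact mul_nonpos_of_nonneg_of_nonpos (ha_pos j t).le (by linarith)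
        -- slope of x · k tends to this derivative from the right
        have hslope : Filter.Tendsto (slope (fun s => x s k) t) (𝓝[>] t)
            (𝓝 ((insert k (G.neighborFinset k)).sup'
              (Finset.insert_nonempty k _) (fun j => a j t * (x t j - x t k)))) :=
          (hasDerivAt_iff_tendsto_slope.1 (hdyn k t ht.1)).mono_left
            (nhdsWithin_mono t (fun z hz => ne_of_gt hz))
        have hev : ∀ᶠ z in 𝓝[>] t, slope (fun s => x s k) t z < r :=
          hslope.eventually_lt_const (lt_of_le_of_lt hd hr)
        refine (hk.and_eventually hev).mono ?_
        rintro z ⟨hz1, hz2⟩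
        have hzz : slope M t z = slope (fun s => x s k) t z := by
          rw [slope_def_field, slope_def_field, hxkM, hz1]
        rw [hzz]
        exact hz2
      · exact (continuous_const.add (continuous_const.mul continuous_id)).continuousOn
      · intro t _
        simpa using (((hasDerivAt_id t).const_mul ε).const_add (M 0)).hasDerivWithinAt
    refine le_of_forall_pos_le_add ?_
    intro ε hε
    have h1 := key (ε / (T + 1)) (by positivity)
    have h2 : ε / (T + 1) * T ≤ ε := by
      rw [div_mul_eq_mul_div, div_le_iff₀ (by linarith)]
      nlinarith
    linarith
  · -- M 0 ≤ M T by monotonicity of each component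
    apply Finset.sup'_le
    intro i _
    exact le_trans (hmono i Set.self_mem_Ici hT hT)
      (Finset.le_sup' _ (Finset.mem_univ i))
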